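/- Let R be a ring and ω an R-R-bimodule. If ω is free of rank one as a left R-module, then there exists a ring endomorphism μ of R such that ω is isomorphic to R_μ as an R-R-bimodule. If moreover ω is an invertible R-R-bimodule, then μ is an automorphism of R. -/

import Mathlib

set_option maxHeartbeats 1000000
set_option synthInstance.maxHeartbeats 400000

noncomputable section
open TensorProduct MulOpposite

universe u

section Balanced
variable (R : Type u) [Ring R]

/-- The subgroup of balancing relations in `M ⊗ N` over `R`. -/
def balRel (M : Type u) [AddCommGroup M] [Module Rᵐᵒᵖ M]
    (N : Type u) [AddCommGroup N] [Module R N] : Submodule ℤ (M ⊗[ℤ] N) :=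
  Submodule.span ℤ
    {z | ∃ (a : R) (m : M) (n : N), z = (op a • m) ⊗ₜ[ℤ] n - m ⊗ₜ[ℤ] (a • n)}

variable (M : Type u) [AddCommGroup M] [Module R M] [Module Rᵐᵒᵖ M]
variable (N : Type u) [AddCommGroup N] [Module R N] [Module Rᵐᵒᵖ N]
variable (P : Type u) [AddCommGroup P] [Module R P] [Module Rᵐᵒᵖ P]

/-- `F` exhibits the `R`-`R`-bimodule `P` as the balanced tensor product `M ⊗_R N`. -/
structure IsTensorProductIso (F : M ⊗[ℤ] N →ₗ[ℤ] P) : Prop where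
  map_left : ∀ (a : R) (m : M) (n : N), F ((a • m) ⊗ₜ[ℤ] n) = a • F (m ⊗ₜ[ℤ] n)
  map_right : ∀ (a : Rᵐᵒᵖ) (m : M) (n : N), F (m ⊗ₜ[ℤ] (a • n)) = a • F (m ⊗ₜ[ℤ] n)
  surjective : Function.Surjective F
  ker_eq : LinearMap.ker F = balRel R M N

/-- An `R`-`R`-bimodule `M` is invertible if there is a bimodule `N` with
`M ⊗_R N ≅ R ≅ N ⊗_R M` as bimodules. -/
def IsInvertibleBimodule : Prop :=
  ∃ (N : Type u) (_ : AddCommGroup N) (_ : Module R N) (_ : Module Rᵐᵒᵖ N),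
    (∃ F : M ⊗[ℤ] N →ₗ[ℤ] R, IsTensorProductIso R M N R F) ∧
      (∃ G : N ⊗[ℤ] M →ₗ[ℤ] R, IsTensorProductIso R N M R G)

end Balanced

/-! A left-linear isomorphism `g : ω ≃ R` turns the right action into a ring endomorphism
`μ r := g (e · r)` with `ω ≅ R_μ`, where `e := g⁻¹ 1`. Tensoring with a bimodule that is free on
`e` as a left module is computed by `m ↦ m ⊗ e`. So `N ⊗ ω ≅ R` makes `N` free of rank one,
`N ≅ R_ν`, with `ν ∘ μ = id`, and then `ω ⊗ N ≅ R` gives `ν` a left inverse as well. Hence `ν` is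
bijective and `μ = ν⁻¹`. -/

open Function

namespace LinearEquiv

variable {R M : Type*} [Ring R] [AddCommGroup M] [Module R M]

theorem smul_symm_one (g : M ≃ₗ[R] R) (r : R) : r • g.symm 1 = g.symm r := by
  rw [← map_smul, smul_eq_mul, mul_one]

section Twist

variable [Module Rᵐᵒᵖ M]

/-- The endomorphism `μ` with `M ≅ R_μ`, read off from the right action on `g.symm 1`. -/
def twist (g : M ≃ₗ[R] R) (r : R) : R :=
  g (op r • g.symm 1)

theorem twist_smul_symm_one (g : M ≃ₗ[R] R) (r : R) :
    g.twist r • g.symm 1 = op r • g.symm 1 := by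
  rw [smul_symm_one, twist, symm_apply_apply]

theorem leftInverse_twist_of_map_op_smul {g : M ≃ₗ[R] R} {f : R → R}
    (hf : ∀ (a : R) (x : M), g (op (f a) • x) = g x * a) : LeftInverse g.twist f := by
  intro a
  rw [twist, hf, apply_symm_apply, one_mul]

variable [SMulCommClass R Rᵐᵒᵖ M]

theorem map_op_smul (g : M ≃ₗ[R] R) (r : R) (x : M) : g (op r • x) = g x * g.twist r := by
  conv_lhs => rw [← g.symm_apply_apply x, ← smul_symm_one, ← smul_comm, map_smul]
  rfl

def twistRingHom (g : M ≃ₗ[R] R) : R →+* R where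
  toFun := g.twist
  map_one' := by rw [twist, op_one, one_smul, apply_symm_apply]
  map_mul' r s := by rw [twist, op_mul, mul_smul, map_op_smul]; rfl
  map_zero' := by rw [twist, op_zero, zero_smul, map_zero]
  map_add' r s := by rw [twist, op_add, add_smul, map_add]; rfl

end Twist

end LinearEquiv

section Balanced

variable {R : Type u} [Ring R] {M : Type u} [AddCommGroup M] [Module Rᵐᵒᵖ M]
  {N : Type u} [AddCommGroup N] [Module R N] {P : Type*} [AddCommGroup P]

theorem map_op_smul_tmul_of_ker_eq_balRel {F : M ⊗[ℤ] N →ₗ[ℤ] P}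
    (hker : LinearMap.ker F = balRel R M N) (a : R) (m : M) (n : N) :
    F ((op a • m) ⊗ₜ n) = F (m ⊗ₜ (a • n)) := by
  have hmem : (op a • m) ⊗ₜ[ℤ] n - m ⊗ₜ (a • n) ∈ LinearMap.ker F :=
    hker ▸ Submodule.subset_span ⟨a, m, n, rfl⟩
  rwa [LinearMap.mem_ker, map_sub, sub_eq_zero] at hmem

/-- Inverts `m ↦ m ⊗ g.symm 1` modulo `balRel`. -/
def balancedContract (g : N ≃ₗ[R] R) : M ⊗[ℤ] N →ₗ[ℤ] M :=
  TensorProduct.lift <| LinearMap.mk₂ ℤ (fun m n => op (g n) • m)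
    (fun _ _ _ => smul_add _ _ _) (fun _ _ _ => smul_comm _ _ _)
    (fun m n n' => by rw [map_add, op_add, add_smul])
    (fun c m n => by rw [map_zsmul, op_smul, smul_assoc])

theorem balancedContract_tmul (g : N ≃ₗ[R] R) (m : M) (n : N) :
    balancedContract g (m ⊗ₜ n) = op (g n) • m :=
  rfl

theorem balRel_le_ker_balancedContract (g : N ≃ₗ[R] R) :
    balRel R M N ≤ LinearMap.ker (balancedContract g) := by
  rw [balRel, Submodule.span_le]
  rintro _ ⟨a, m, n, rfl⟩
  rw [SetLike.mem_coe, LinearMap.mem_ker, map_sub, balancedContract_tmul, balancedContract_tmul,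
    map_smul, smul_eq_mul, op_mul, mul_smul, sub_self]

theorem bijective_map_tmul_symm_one {F : M ⊗[ℤ] N →ₗ[ℤ] P} (hsurj : Surjective F)
    (hker : LinearMap.ker F = balRel R M N) (g : N ≃ₗ[R] R) :
    Bijective fun m : M => F (m ⊗ₜ g.symm 1) := by
  have hF : ∀ z, F (balancedContract g z ⊗ₜ g.symm 1) = F z := by
    intro z
    induction z using TensorProduct.induction_on with
    | zero => simp
    | tmul m n =>
      rw [balancedContract_tmul, map_op_smul_tmul_of_ker_eq_balRel hker,
        LinearEquiv.smul_symm_one, LinearEquiv.symm_apply_apply]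
    | add z z' hz hz' => simp only [map_add, add_tmul, hz, hz']
  refine ⟨fun m m' hmm' => ?_, fun p => ?_⟩
  · have hmem : m ⊗ₜ[ℤ] g.symm 1 - m' ⊗ₜ g.symm 1 ∈ LinearMap.ker F := by
      rw [LinearMap.mem_ker, map_sub, sub_eq_zero]
      exact hmm'
    have := balRel_le_ker_balancedContract g (hker ▸ hmem)
    rwa [LinearMap.mem_ker, map_sub, balancedContract_tmul, balancedContract_tmul,
      LinearEquiv.apply_symm_apply, op_one, one_smul, one_smul, sub_eq_zero] at this
  · obtain ⟨z, rfl⟩ := hsurj p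
    exact ⟨balancedContract g z, hF z⟩

variable [Module R M] [Module Rᵐᵒᵖ N]

theorem IsTensorProductIso.exists_leftInverse_twist {F : M ⊗[ℤ] N →ₗ[ℤ] R}
    (hF : IsTensorProductIso R M N R F) (g : N ≃ₗ[R] R) :
    ∃ φ : M ≃ₗ[R] R, LeftInverse φ.twist g.twist := by
  let φ₀ : M →ₗ[R] R :=
    { toFun m := F (m ⊗ₜ g.symm 1)
      map_add' m m' := by rw [add_tmul, map_add]
      map_smul' r m := hF.map_left r m _ }
  refine ⟨LinearEquiv.ofBijective φ₀ (bijective_map_tmul_symm_one hF.surjective hF.ker_eq g),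
    LinearEquiv.leftInverse_twist_of_map_op_smul fun a m => ?_⟩
  change F _ = F _ * a
  rw [map_op_smul_tmul_of_ker_eq_balRel hF.ker_eq, g.twist_smul_symm_one, hF.map_right,
    smul_eq_mul_unop, unop_op]

end Balanced

theorem statement2 (R : Type u) [Ring R]
    (ω : Type u) [AddCommGroup ω] [Module R ω] [Module Rᵐᵒᵖ ω] [SMulCommClass R Rᵐᵒᵖ ω]
    (e : ω) (he : Function.Bijective fun r : R => r • e) :
    (∃ μ : R →+* R, ∃ g : ω ≃+ R,
        (∀ (r : R) (x : ω), g (r • x) = r * g x) ∧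
        (∀ (r : R) (x : ω), g (op r • x) = g x * μ r)) ∧
      (IsInvertibleBimodule R ω →
        ∃ μ : R ≃+* R, ∃ g : ω ≃+ R,
          (∀ (r : R) (x : ω), g (r • x) = r * g x) ∧
          (∀ (r : R) (x : ω), g (op r • x) = g x * μ r)) := by
  let g : ω ≃ₗ[R] R := (LinearEquiv.ofBijective (LinearMap.toSpanSingleton R ω e) he).symm
  refine ⟨⟨g.twistRingHom, g.toAddEquiv, g.map_smul, g.map_op_smul⟩, ?_⟩
  rintro ⟨N, _, _, _, ⟨F, hF⟩, ⟨G, hG⟩⟩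
  obtain ⟨g', hνμ⟩ := hG.exists_leftInverse_twist g
  obtain ⟨ψ, hψν⟩ := hF.exists_leftInverse_twist g'
  have hμν : LeftInverse g.twist g'.twist := hνμ.rightInverse_of_injective hψν.injective
  exact ⟨RingEquiv.ofBijective g.twistRingHom ⟨hνμ.injective, hμν.surjective⟩,
    g.toAddEquiv, g.map_smul, g.map_op_smul⟩
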